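/- Let λ ∈ ℝ \ {0} and let f : Ω → ℝ be a regular c_λ-convex function on a nonempty open convex set Ω ⊂ ℝ^d, with Ω' = ∇^{c_λ} f(Ω) and f^{c_λ} its c_λ-conjugate regarded as a function on Ω'. Then the double conjugate recovers f: for every u ∈ Ω, f(u) = sup_{v ∈ Ω'} { (1/λ)·log(1 + λ u·v) − f^{c_λ}(v) }, i.e. (f^{c_λ})^{c_λ} = f on Ω. -/

import Mathlib

/-!
Write `F_λ = (e^{λ f} - 1)/λ` and `v = ∇^{c_λ} f(u)`. Convexity of `F_λ` puts it above its
tangent plane at `u`. Since `∇F_λ(u) = e^{λ f(u)} ∇f(u)` and `t ↦ (e^{λ t} - 1)/λ` is increasing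
with inverse the `λ`-logarithm `s ↦ (1/λ) log(1 + λ s)`, this reads
`(1/λ) log(1 + λ ∇f(u)·(u' - u)) ≤ f(u') - f(u)` on `Ω` (for `λ < 0` it also forces the argument
of the logarithm to be positive; for `λ > 0` the points where it is not contribute `-∞`).
As `1 + λ u'·v = (1 + λ ∇f(u)·(u' - u))(1 + λ u·v)`, this says that `u` attains the supremum
defining `f^{c_λ}(v)`: `f(u) + f^{c_λ}(v) = (1/λ) log(1 + λ u·v)`. So `v` attains the
supremum defining `(f^{c_λ})^{c_λ}(u)` with value `f(u)`, which bounds every other term by the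
definition of `f^{c_λ}`.
-/

open MeasureTheory Real
open scoped RealInnerProductSpace ENNReal BigOperators

noncomputable section

/-- The negative logarithmic cost `-c_λ(u,v) = (1/λ)·log(1 + λ u·v)`, valued in `EReal`,
with the convention `log t = -∞` for `t ≤ 0` (so that `(1/λ)·(-∞) = -∞` for `λ > 0` and
`= +∞` for `λ < 0`). -/
def negCost {d : ℕ} (lam : ℝ) (u v : EuclideanSpace ℝ (Fin d)) : EReal :=
  if 0 < 1 + lam * ⟪u, v⟫ then (((1 / lam) * Real.log (1 + lam * ⟪u, v⟫) : ℝ) : EReal)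
  else if 0 < lam then ⊥ else ⊤

/-- The `c_λ`-conjugate `f^{c_λ}(v) = sup_{u ∈ Ω} { (1/λ)·log(1 + λ u·v) − f(u) }`. -/
def lamConj {d : ℕ} (lam : ℝ) (Ω : Set (EuclideanSpace ℝ (Fin d)))
    (f : EuclideanSpace ℝ (Fin d) → ℝ) (v : EuclideanSpace ℝ (Fin d)) : EReal :=
  ⨆ u ∈ Ω, (negCost lam u v - ((f u : ℝ) : EReal))

/-- The `λ`-gradient (deformed Legendre transform) `∇^{c_λ} f(u) = ∇f(u)/(1 − λ ∇f(u)·u)`. -/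
def lamGrad {d : ℕ} (lam : ℝ) (f : EuclideanSpace ℝ (Fin d) → ℝ)
    (u : EuclideanSpace ℝ (Fin d)) : EuclideanSpace ℝ (Fin d) :=
  (1 - lam * ⟪gradient f u, u⟫)⁻¹ • gradient f u

/-- A regular `c_λ`-convex function: `f` smooth on a nonempty open convex `Ω`, the Hessian of
`F_λ = (1/λ)(e^{λ f} − 1)` strictly positive definite on `Ω`, and `1 − λ ∇f(u)·u > 0` on `Ω`. -/
def IsRegularCConvex {d : ℕ} (lam : ℝ) (Ω : Set (EuclideanSpace ℝ (Fin d)))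
    (f : EuclideanSpace ℝ (Fin d) → ℝ) : Prop :=
  Ω.Nonempty ∧ IsOpen Ω ∧ Convex ℝ Ω ∧ ContDiffOn ℝ (⊤ : ℕ∞) f Ω ∧
    (∀ u ∈ Ω, ∀ w : EuclideanSpace ℝ (Fin d), w ≠ 0 →
      0 < ⟪fderiv ℝ (gradient fun z => (1 / lam) * (Real.exp (lam * f z) - 1)) u w, w⟫) ∧
    ∀ u ∈ Ω, 0 < 1 - lam * ⟪gradient f u, u⟫

open InnerProductSpace Set

theorem hasDerivAt_comp_add_smul {E F : Type*} [NormedAddCommGroup E] [NormedSpace ℝ E]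
    [NormedAddCommGroup F] [NormedSpace ℝ F] {G : E → F} {x w : E} {t : ℝ}
    (hG : DifferentiableAt ℝ G (x + t • w)) :
    HasDerivAt (fun t : ℝ => G (x + t • w)) (fderiv ℝ G (x + t • w) w) t := by
  have hline := ((hasDerivAt_id' t).smul_const w).const_add x
  rw [one_smul] at hline
  exact hG.hasFDerivAt.comp_hasDerivAt t hline

section Gradient

variable {E : Type*} [NormedAddCommGroup E] [InnerProductSpace ℝ E] [CompleteSpace E]

theorem HasDerivAt.comp_hasGradientAt {g : ℝ → ℝ} {g' : ℝ} {F : E → ℝ} {F' x : E}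
    (hg : HasDerivAt g g' (F x)) (hF : HasGradientAt F F' x) :
    HasGradientAt (g ∘ F) (g' • F') x := by
  rw [hasGradientAt_iff_hasFDerivAt, map_smul]
  exact hg.comp_hasFDerivAt x hF.hasFDerivAt

theorem ContDiffAt.differentiableAt_gradient {F : E → ℝ} {x : E} (hF : ContDiffAt ℝ 2 F x) :
    DifferentiableAt ℝ (gradient F) x :=
  (toDual ℝ E).symm.toContinuousLinearEquiv.differentiableAt.comp x
    ((hF.fderiv_right (m := 1) le_rfl).differentiableAt one_ne_zero)

theorem Convex.inner_gradient_sub_le {Ω : Set E} (hΩ : Convex ℝ Ω) {F : E → ℝ}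
    (hF : ∀ x ∈ Ω, DifferentiableAt ℝ F x) (hF' : ∀ x ∈ Ω, DifferentiableAt ℝ (gradient F) x)
    (hF'' : ∀ x ∈ Ω, ∀ w, 0 ≤ ⟪fderiv ℝ (gradient F) x w, w⟫) {x y : E} (hx : x ∈ Ω)
    (hy : y ∈ Ω) : ⟪gradient F x, y - x⟫ ≤ F y - F x := by
  set w := y - x
  have hseg : ∀ t ∈ Icc (0 : ℝ) 1, x + t • w ∈ Ω := fun t ht => hΩ.add_smul_sub_mem hx hy ht
  have hφ : ∀ t ∈ Icc (0 : ℝ) 1,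
      HasDerivAt (fun t : ℝ => F (x + t • w)) ⟪gradient F (x + t • w), w⟫ t := fun t ht => by
    rw [inner_gradient_left]
    exact hasDerivAt_comp_add_smul (hF _ (hseg t ht))
  have hψ : ∀ t ∈ Icc (0 : ℝ) 1, HasDerivAt (fun t : ℝ => ⟪gradient F (x + t • w), w⟫)
      ⟪fderiv ℝ (gradient F) (x + t • w) w, w⟫ t := fun t ht => by
    simpa using (hasDerivAt_comp_add_smul (hF' _ (hseg t ht))).inner ℝ (hasDerivAt_const t w)
  have hconv : ConvexOn ℝ (Icc 0 1) (fun t : ℝ => F (x + t • w)) := by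
    refine convexOn_of_hasDerivWithinAt2_nonneg (convex_Icc 0 1)
      (fun t ht => (hφ t ht).continuousAt.continuousWithinAt)
      (fun t ht => (hφ t (interior_subset ht)).hasDerivWithinAt)
      (fun t ht => (hψ t (interior_subset ht)).hasDerivWithinAt)
      (fun t ht => hF'' _ (hseg t (interior_subset ht)) w)
  have hzero : (0 : ℝ) ∈ Icc (0 : ℝ) 1 := left_mem_Icc.2 zero_le_one
  simpa [slope_def_field, w] using hconv.le_slope_of_hasDerivAt hzero
    (right_mem_Icc.2 zero_le_one) zero_lt_one (hφ 0 hzero)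

end Gradient

/-- `F_λ = lamExp λ ∘ f`. On `{s | 0 < 1 + λ s}` the inverse of `lamExp λ` is the `λ`-logarithm
`s ↦ (1/λ) log (1 + λ s)` of `negCost`. -/
def lamExp (lam t : ℝ) : ℝ := 1 / lam * (Real.exp (lam * t) - 1)

section LamExp

variable {lam : ℝ}

theorem lamExp_sub_lamExp (lam a b : ℝ) :
    lamExp lam b - lamExp lam a = Real.exp (lam * a) * lamExp lam (b - a) := by
  simp only [lamExp, mul_sub, Real.exp_sub]
  field_simp
  ring

theorem one_add_mul_lamExp (hlam : lam ≠ 0) (t : ℝ) :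
    1 + lam * lamExp lam t = Real.exp (lam * t) := by
  simp only [lamExp]
  field_simp
  ring

theorem hasDerivAt_lamExp (hlam : lam ≠ 0) (t : ℝ) :
    HasDerivAt (lamExp lam) (Real.exp (lam * t)) t := by
  have h := (((hasDerivAt_id' t).const_mul lam).exp.sub_const 1).const_mul (1 / lam)
  exact h.congr_deriv (by field_simp)

theorem lamExp_strictMono (hlam : lam ≠ 0) : StrictMono (lamExp lam) :=
  strictMono_of_deriv_pos fun t => (hasDerivAt_lamExp hlam t).deriv ▸ Real.exp_pos _

theorem lamExp_lamLog (hlam : lam ≠ 0) {s : ℝ} (hs : 0 < 1 + lam * s) :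
    lamExp lam (1 / lam * Real.log (1 + lam * s)) = s := by
  simp only [lamExp]
  rw [← mul_assoc, mul_one_div_cancel hlam, one_mul, Real.exp_log hs]
  field_simp
  ring

theorem lamLog_le_of_le_lamExp (hlam : lam ≠ 0) {s t : ℝ} (hs : 0 < 1 + lam * s)
    (h : s ≤ lamExp lam t) : 1 / lam * Real.log (1 + lam * s) ≤ t := by
  rwa [← (lamExp_strictMono hlam).le_iff_le, lamExp_lamLog hlam hs]

theorem one_add_mul_pos_of_le_lamExp (hlam : lam < 0) {s t : ℝ} (h : s ≤ lamExp lam t) :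
    0 < 1 + lam * s :=
  calc 0 < Real.exp (lam * t) := Real.exp_pos _
    _ = 1 + lam * lamExp lam t := (one_add_mul_lamExp hlam.ne t).symm
    _ ≤ 1 + lam * s := by linarith [mul_le_mul_of_nonpos_left h hlam.le]

end LamExp

section CConvex

variable {d : ℕ} {lam : ℝ} {Ω : Set (EuclideanSpace ℝ (Fin d))}
  {f : EuclideanSpace ℝ (Fin d) → ℝ} {u u' v : EuclideanSpace ℝ (Fin d)}

theorem negCost_of_pos (h : 0 < 1 + lam * ⟪u, v⟫) :
    negCost lam u v = ((1 / lam * Real.log (1 + lam * ⟪u, v⟫) : ℝ) : EReal) :=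
  if_pos h

theorem negCost_of_nonpos (h : 1 + lam * ⟪u, v⟫ ≤ 0) (hlam : 0 < lam) : negCost lam u v = ⊥ := by
  rw [negCost, if_neg h.not_gt, if_pos hlam]

theorem one_add_mul_inner_lamGrad (hD : 1 - lam * ⟪gradient f u, u⟫ ≠ 0) :
    1 + lam * ⟪u', lamGrad lam f u⟫ =
      (1 + lam * ⟪gradient f u, u' - u⟫) * (1 - lam * ⟪gradient f u, u⟫)⁻¹ := by
  rw [lamGrad, real_inner_smul_right, inner_sub_right, real_inner_comm u']
  field_simp
  ring

theorem one_add_mul_inner_self_lamGrad (hD : 1 - lam * ⟪gradient f u, u⟫ ≠ 0) :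
    1 + lam * ⟪u, lamGrad lam f u⟫ = (1 - lam * ⟪gradient f u, u⟫)⁻¹ := by
  simp [one_add_mul_inner_lamGrad hD]

theorem negCost_sub_lamConj_le (hu : u ∈ Ω) : negCost lam u v - lamConj lam Ω f v ≤ f u := by
  apply EReal.sub_le_of_le_add'
  rw [← EReal.sub_le_iff_le_add (.inl (EReal.coe_ne_bot _)) (.inl (EReal.coe_ne_top _))]
  exact le_iSup₂ (f := fun x _ => negCost lam x v - (f x : EReal)) u hu

namespace IsRegularCConvex

theorem one_add_mul_inner_self_lamGrad_pos (hreg : IsRegularCConvex lam Ω f) (hu : u ∈ Ω) :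
    0 < 1 + lam * ⟪u, lamGrad lam f u⟫ := by
  have hD := hreg.2.2.2.2.2 u hu
  exact one_add_mul_inner_self_lamGrad hD.ne' ▸ inv_pos.2 hD

theorem contDiffAt (hreg : IsRegularCConvex lam Ω f) {x : EuclideanSpace ℝ (Fin d)}
    (hx : x ∈ Ω) : ContDiffAt ℝ 2 f x :=
  (hreg.2.2.2.1.contDiffAt (hreg.2.1.mem_nhds hx)).of_le (WithTop.coe_le_coe.2 le_top)

theorem inner_gradient_sub_le_lamExp (hlam : lam ≠ 0) (hreg : IsRegularCConvex lam Ω f)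
    (hu : u ∈ Ω) (hu' : u' ∈ Ω) : ⟪gradient f u, u' - u⟫ ≤ lamExp lam (f u' - f u) := by
  have hF : ∀ x ∈ Ω, ContDiffAt ℝ 2 (lamExp lam ∘ f) x := fun x hx =>
    (ContDiff.contDiffAt (by unfold lamExp; fun_prop)).comp x (hreg.contDiffAt hx)
  have hgrad : gradient (lamExp lam ∘ f) u = Real.exp (lam * f u) • gradient f u :=
    ((hasDerivAt_lamExp hlam (f u)).comp_hasGradientAt
      ((hreg.contDiffAt hu).differentiableAt two_ne_zero).hasGradientAt).gradient
  obtain ⟨-, -, hconv, -, hhess, -⟩ := hreg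
  have hsupport := hconv.inner_gradient_sub_le
    (fun x hx => (hF x hx).differentiableAt two_ne_zero)
    (fun x hx => (hF x hx).differentiableAt_gradient)
    (fun x hx w => (eq_or_ne w 0).elim (fun hw => by simp [hw]) fun hw => (hhess x hx w hw).le)
    hu hu'
  rw [hgrad, real_inner_smul_left, Function.comp_apply, Function.comp_apply,
    lamExp_sub_lamExp] at hsupport
  exact le_of_mul_le_mul_left hsupport (Real.exp_pos _)

theorem negCost_lamGrad_sub_le (hlam : lam ≠ 0) (hreg : IsRegularCConvex lam Ω f)
    (hu : u ∈ Ω) (hu' : u' ∈ Ω) :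
    negCost lam u' (lamGrad lam f u) - f u' ≤ negCost lam u (lamGrad lam f u) - f u := by
  set s := ⟪gradient f u, u' - u⟫
  have hD := (hreg.2.2.2.2.2 u hu).ne'
  have hkey : s ≤ lamExp lam (f u' - f u) := hreg.inner_gradient_sub_le_lamExp hlam hu hu'
  have hprod : 1 + lam * ⟪u', lamGrad lam f u⟫ =
      (1 + lam * s) * (1 + lam * ⟪u, lamGrad lam f u⟫) := by
    rw [one_add_mul_inner_self_lamGrad hD, one_add_mul_inner_lamGrad hD]
  have hQ := hreg.one_add_mul_inner_self_lamGrad_pos hu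
  rw [negCost_of_pos hQ]
  by_cases hP : 0 < 1 + lam * s
  · rw [negCost_of_pos (hprod ▸ mul_pos hP hQ), hprod, Real.log_mul hP.ne' hQ.ne',
      ← EReal.coe_sub, ← EReal.coe_sub, EReal.coe_le_coe_iff, mul_add]
    linarith [lamLog_le_of_le_lamExp hlam hP hkey]
  · have hlam_pos : 0 < lam :=
      hlam.lt_or_gt.resolve_left fun hneg => hP (one_add_mul_pos_of_le_lamExp hneg hkey)
    rw [negCost_of_nonpos (hprod ▸ mul_nonpos_of_nonpos_of_nonneg (not_lt.1 hP) hQ.le) hlam_pos,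
      EReal.bot_sub]
    exact bot_le

theorem lamConj_lamGrad (hlam : lam ≠ 0) (hreg : IsRegularCConvex lam Ω f) (hu : u ∈ Ω) :
    lamConj lam Ω f (lamGrad lam f u) = negCost lam u (lamGrad lam f u) - f u :=
  le_antisymm (iSup₂_le fun _ hu' => hreg.negCost_lamGrad_sub_le hlam hu hu')
    (le_iSup₂ (f := fun x _ => negCost lam x (lamGrad lam f u) - (f x : EReal)) u hu)

end IsRegularCConvex

end CConvex

/-- For a regular `c_λ`-convex function `f` on `Ω`, with `Ω' = ∇^{c_λ} f(Ω)`
and `f^{c_λ}` its `c_λ`-conjugate regarded as a function on `Ω'`, the double conjugate recovers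
`f`: for every `u ∈ Ω`, `f(u) = sup_{v ∈ Ω'} { (1/λ)·log(1 + λ u·v) − f^{c_λ}(v) }`. -/
theorem lamConj_involutive {d : ℕ} (lam : ℝ) (hlam : lam ≠ 0)
    (Ω : Set (EuclideanSpace ℝ (Fin d))) (f : EuclideanSpace ℝ (Fin d) → ℝ)
    (hreg : IsRegularCConvex lam Ω f)
    (u : EuclideanSpace ℝ (Fin d)) (hu : u ∈ Ω) :
    (f u : EReal) = ⨆ v ∈ lamGrad lam f '' Ω, (negCost lam u v - lamConj lam Ω f v) := by
  refine le_antisymm ?_ (iSup₂_le fun v _ => negCost_sub_lamConj_le hu)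
  refine le_iSup₂_of_le (lamGrad lam f u) (mem_image_of_mem _ hu) ?_
  rw [hreg.lamConj_lamGrad hlam hu, negCost_of_pos (hreg.one_add_mul_inner_self_lamGrad_pos hu),
    ← EReal.coe_sub, ← EReal.coe_sub, sub_sub_cancel]
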